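/- Let f : Finset α → ℝ be a function such that C_f(D) = 0 for every finite set D with |D| > n, where C_f(D) = Σ_{H ⊆ D} (−1)^{|D| − |H|} f(H). Then f is finite type of order ≤ n: for every pair of finite sets D′ ⊆ D with |D| − |D′| > n, Σ_{D′ ⊆ H ⊆ D} (−1)^{|D| − |H|} f(H) = 0. -/

import Mathlib

/-!
Inverting the transform gives `f(H) = Σ_{K ⊆ H} C_f(K)`. Substituting this into the alternating
sum over `D' ⊆ H ⊆ D` and exchanging the sums, the coefficient of `C_f(K)` is the alternating sum
over the interval `[D' ∪ K, D]`, which vanishes unless `D' ∪ K = D`. Every surviving `K` contains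
`D \ D'`, so `|K| > n` and `C_f(K) = 0`.
-/

open Finset

/-- The alternating-sum transform `C_f(D) = Σ_{H ⊆ D} (−1)^(|D| − |H|) f(H)`. -/
noncomputable def Cf {α : Type*} (f : Finset α → ℝ) (D : Finset α) : ℝ :=
  ∑ H ∈ D.powerset, (-1 : ℝ) ^ (D.card - H.card) * f H

/-- `f` is finite type of order ≤ n: for all `D' ⊆ D` with `|D| − |D'| > n`,
the alternating sum `Σ_{D' ⊆ H ⊆ D} (−1)^(|D| − |H|) f(H)` vanishes. -/
def FiniteTypeLE {α : Type*} [DecidableEq α] (n : ℕ) (f : Finset α → ℝ) : Prop :=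
  ∀ D' D : Finset α, D' ⊆ D → D.card - D'.card > n →
    ∑ H ∈ D.powerset.filter (fun H => D' ⊆ H),
      (-1 : ℝ) ^ (D.card - H.card) * f H = 0

lemma neg_one_pow_sub_of_le {R : Type*} [Monoid R] [HasDistribNeg R] {k m : ℕ} (h : k ≤ m) :
    (-1 : R) ^ (m - k) = (-1) ^ m * (-1) ^ k := by
  obtain ⟨d, rfl⟩ := Nat.exists_eq_add_of_le h
  rw [Nat.add_sub_cancel_left, pow_add, mul_assoc, ((Commute.refl (-1 : R)).pow_pow d k).eq,
    ← mul_assoc, ← pow_add, Even.neg_one_pow ⟨k, rfl⟩, one_mul]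

section Interval

variable {α R : Type*} [DecidableEq α] [CommRing R] {A B : Finset α}

lemma sum_Icc_neg_one_pow_card (hAB : A ⊆ B) :
    ∑ H ∈ Icc A B, (-1 : R) ^ #H = if A = B then (-1) ^ #A else 0 := by
  have hdisj : ∀ T ∈ (B \ A).powerset, Disjoint A T :=
    fun T hT ↦ disjoint_sdiff.mono_right (mem_powerset.1 hT)
  rw [Icc_eq_image_powerset hAB, sum_image fun T hT T' hT' h ↦ by
    rw [← union_sdiff_cancel_left (hdisj T hT), h, union_sdiff_cancel_left (hdisj T' hT')]]
  calc ∑ T ∈ (B \ A).powerset, (-1 : R) ^ #(A ∪ T)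
      = (-1) ^ #A * ((∑ T ∈ (B \ A).powerset, (-1 : ℤ) ^ #T : ℤ) : R) := by
        push_cast
        rw [mul_sum]
        exact sum_congr rfl fun T hT ↦ by rw [card_union_of_disjoint (hdisj T hT), pow_add]
    _ = if A = B then (-1) ^ #A else 0 := by
        have hempty : B \ A = ∅ ↔ A = B := sdiff_eq_empty_iff_subset.trans
          ⟨hAB.antisymm, fun h ↦ h ▸ subset_rfl⟩
        simp only [sum_powerset_neg_one_pow_card, hempty]
        split_ifs <;> simp

lemma sum_Icc_neg_one_pow_card_sub_card_left (hAB : A ⊆ B) :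
    ∑ H ∈ Icc A B, (-1 : R) ^ (#H - #A) = if A = B then 1 else 0 := by
  rw [sum_congr rfl fun H hH ↦ neg_one_pow_sub_of_le (card_le_card (mem_Icc.1 hH).1),
    ← sum_mul, sum_Icc_neg_one_pow_card hAB]
  split_ifs <;> simp [← pow_add, Even.neg_one_pow ⟨#A, rfl⟩]

lemma sum_Icc_neg_one_pow_card_sub_card_right (hAB : A ⊆ B) :
    ∑ H ∈ Icc A B, (-1 : R) ^ (#B - #H) = if A = B then 1 else 0 := by
  rw [sum_congr rfl fun H hH ↦ neg_one_pow_sub_of_le (card_le_card (mem_Icc.1 hH).2),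
    ← mul_sum, sum_Icc_neg_one_pow_card hAB]
  split_ifs with h <;> simp [h, ← pow_add, Even.neg_one_pow ⟨#B, rfl⟩]

end Interval

lemma sum_Icc_neg_one_pow_mul_sum_powerset {α R : Type*} [DecidableEq α] [CommRing R]
    {A B : Finset α} (hAB : A ⊆ B) (g : Finset α → R) :
    ∑ H ∈ Icc A B, (-1 : R) ^ (#B - #H) * ∑ K ∈ H.powerset, g K
      = ∑ K ∈ B.powerset with A ∪ K = B, g K := by
  simp_rw [mul_sum]
  rw [sum_comm' (t' := B.powerset) (s' := fun K ↦ Icc (A ∪ K) B) fun H K ↦ by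
    simp only [mem_Icc, mem_powerset, union_subset_iff]
    exact ⟨fun ⟨⟨hAH, hHB⟩, hKH⟩ ↦ ⟨⟨⟨hAH, hKH⟩, hHB⟩, hKH.trans hHB⟩,
      fun ⟨⟨⟨hAH, hKH⟩, hHB⟩, _⟩ ↦ ⟨⟨hAH, hHB⟩, hKH⟩⟩]
  simp_rw [← sum_mul]
  rw [sum_filter]
  refine sum_congr rfl fun K hK ↦ ?_
  rw [sum_Icc_neg_one_pow_card_sub_card_right (union_subset hAB (mem_powerset.1 hK)), ite_mul,
    one_mul, zero_mul]

lemma sum_powerset_Cf {α : Type*} [DecidableEq α] (f : Finset α → ℝ) (D : Finset α) :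
    ∑ K ∈ D.powerset, Cf f K = f D := by
  unfold Cf
  rw [sum_comm' (t' := D.powerset) (s' := fun H ↦ Icc H D) fun K H ↦ by
    simp only [mem_Icc, mem_powerset]
    exact ⟨fun ⟨hKD, hHK⟩ ↦ ⟨⟨hHK, hKD⟩, hHK.trans hKD⟩, fun ⟨⟨hHK, hKD⟩, _⟩ ↦ ⟨hKD, hHK⟩⟩]
  simp_rw [← sum_mul]
  rw [sum_congr rfl fun H hH ↦ by
    rw [sum_Icc_neg_one_pow_card_sub_card_left (mem_powerset.1 hH)]]
  simp

/-- If `C_f(D) = 0` for every `D` with `|D| > n`, then `f` is finite type of order ≤ n. -/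
theorem finiteType_of_Cf_eq_zero {α : Type*} [DecidableEq α] (n : ℕ) (f : Finset α → ℝ)
    (hC : ∀ D : Finset α, D.card > n → Cf f D = 0) :
    FiniteTypeLE n f := by
  intro D' D hD'D hcard
  rw [← Icc_eq_filter_powerset]
  simp_rw [← sum_powerset_Cf f]
  rw [sum_Icc_neg_one_pow_mul_sum_powerset hD'D]
  refine sum_eq_zero fun K hK ↦ hC K ?_
  have hcover := card_union_le D' K
  rw [(mem_filter.1 hK).2] at hcover
  omega
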